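/- arXiv:1309.6976 — 6 statements merged into one kernel-verified Lean document; each statement's English description precedes it below -/
import Mathlib

section
/- If (L*, S*) is an optimal solution to the problem min ||L||_* + ξ||π_Ω(S)||_1 subject to ||L + S - π_Ω(D)||_F ≤ δ, then (L*, π_Ω(S*)) is an optimal solution to the problem min ||L||_* + ξ||S||_1 subject to ||π_Ω(L + S - D)||_F ≤ δ. -/
open Matrix BigOperators Finset

variable {m n : ℕ}

/-- Euclidean norm of a vector. -/
noncomputable def e2 {k : ℕ} (v : Fin k → ℝ) : ℝ := Real.sqrt (∑ i, v i ^ 2)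

/-- Spectral norm (largest singular value) of a matrix, as the operator norm ℓ2 → ℓ2. -/
noncomputable def specNorm (A : Matrix (Fin m) (Fin n) ℝ) : ℝ :=
  sSup {c | ∃ x : Fin n → ℝ, e2 x ≤ 1 ∧ c = e2 (A.mulVec x)}

/-- Frobenius (trace) inner product. -/
noncomputable def frobInner (A B : Matrix (Fin m) (Fin n) ℝ) : ℝ := ∑ i, ∑ j, A i j * B i j

/-- Nuclear norm, via duality with the spectral norm. -/
noncomputable def nucNorm (A : Matrix (Fin m) (Fin n) ℝ) : ℝ :=
  sSup {c | ∃ W : Matrix (Fin m) (Fin n) ℝ, specNorm W ≤ 1 ∧ c = frobInner A W}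

/-- Frobenius norm. -/
noncomputable def frobNorm (A : Matrix (Fin m) (Fin n) ℝ) : ℝ :=
  Real.sqrt (∑ i, ∑ j, A i j ^ 2)

/-- Squared Frobenius norm. -/
noncomputable def frobSq (A : Matrix (Fin m) (Fin n) ℝ) : ℝ := ∑ i, ∑ j, A i j ^ 2

/-- Entrywise ℓ1 norm. -/
noncomputable def l1Norm (A : Matrix (Fin m) (Fin n) ℝ) : ℝ := ∑ i, ∑ j, |A i j|

/-- Projection onto the index set Ω (zeroing out entries off Ω). -/
def piom (Ω : Finset (Fin m × Fin n)) (A : Matrix (Fin m) (Fin n) ℝ) :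
    Matrix (Fin m) (Fin n) ℝ :=
  Matrix.of fun i j => if (i, j) ∈ Ω then A i j else 0

lemma frobNorm_mono {A B : Matrix (Fin m) (Fin n) ℝ}
    (h : ∀ i j, A i j ^ 2 ≤ B i j ^ 2) : frobNorm A ≤ frobNorm B := by
  unfold frobNorm
  exact Real.sqrt_le_sqrt (Finset.sum_le_sum fun i _ =>
    Finset.sum_le_sum fun j _ => h i j)

/-- If `(L*, S*)` is optimal for
`min ‖L‖_* + ξ‖π_Ω(S)‖₁ s.t. ‖L + S - π_Ω(D)‖_F ≤ δ`, then `(L*, π_Ω(S*))` is optimal for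
`min ‖L‖_* + ξ‖S‖₁ s.t. ‖π_Ω(L + S - D)‖_F ≤ δ`. -/
theorem stmt0 (D : Matrix (Fin m) (Fin n) ℝ) (Ω : Finset (Fin m × Fin n))
    (ξ δ : ℝ) (hξ : 0 < ξ) (hδ : 0 ≤ δ)
    (Lstar Sstar : Matrix (Fin m) (Fin n) ℝ)
    (hfeas : frobNorm (Lstar + Sstar - piom Ω D) ≤ δ)
    (hopt : ∀ L S : Matrix (Fin m) (Fin n) ℝ, frobNorm (L + S - piom Ω D) ≤ δ →
      nucNorm Lstar + ξ * l1Norm (piom Ω Sstar) ≤ nucNorm L + ξ * l1Norm (piom Ω S)) :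
    frobNorm (piom Ω (Lstar + piom Ω Sstar - D)) ≤ δ ∧
      ∀ L S : Matrix (Fin m) (Fin n) ℝ, frobNorm (piom Ω (L + S - D)) ≤ δ →
        nucNorm Lstar + ξ * l1Norm (piom Ω Sstar) ≤ nucNorm L + ξ * l1Norm S := by
  constructor
  · refine le_trans (frobNorm_mono fun i j => ?_) hfeas
    simp only [piom, Matrix.sub_apply, Matrix.add_apply, Matrix.of_apply]
    by_cases h : (i, j) ∈ Ω <;> simp [h] <;> positivity
  · intro L S hLS
    set S' : Matrix (Fin m) (Fin n) ℝ := piom Ω (L + S - D) - L + piom Ω D with hS'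
    have hfeq : L + S' - piom Ω D = piom Ω (L + S - D) := by
      ext i j; simp [hS']; ring
    have hproj : piom Ω S' = piom Ω S := by
      ext i j
      simp only [piom, Matrix.of_apply, hS', Matrix.add_apply, Matrix.sub_apply]
      by_cases h : (i, j) ∈ Ω <;> simp [h] <;> ring
    have := hopt L S' (by rw [hfeq]; exact hLS)
    rw [hproj] at this
    refine this.trans ?_
    gcongr
    unfold l1Norm piom
    refine Finset.sum_le_sum fun i _ => Finset.sum_le_sum fun j _ => ?_
    simp only [Matrix.of_apply]
    by_cases h : (i, j) ∈ Ω <;> simp [h, abs_nonneg]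
end

section
/- The optimal solution of the problem max { ⟨L, W⟩ - (μ/2)||W||_F² : W ∈ ℝ^{m×n}, ||W|| ≤ 1 } (spectral norm constraint) is W_μ(L) = U Diag(min{σ̄/μ, 1}) Vᵀ, where L = U Diag(σ̄) Vᵀ is a singular value decomposition of L and the min is taken componentwise. -/
open Matrix BigOperators Finset

variable {m n : ℕ}

/-! The objective is a concave quadratic, so a feasible `W⋆` maximises it over the spectral-norm
ball once the first-order condition `⟨L - μ W⋆, W - W⋆⟩ ≤ 0` holds for every feasible `W`.
For `W⋆ = U Diag(min(σ̄/μ, 1)) Vᵀ` one has `L - μ W⋆ = U Diag(max(σ̄ - μ, 0)) Vᵀ`, whose weights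
vanish except where `W⋆` is saturated, so the condition reduces to `uₗᵀ W vₗ ≤ 1` for the unit
singular vectors `uₗ, vₗ`, which holds because `‖W‖ ≤ 1`. -/

section

variable {k : ℕ}

lemma e2_eq_sqrt_dotProduct (v : Fin k → ℝ) : e2 v = √(v ⬝ᵥ v) := by
  simp only [e2, dotProduct, sq]

lemma e2_nonneg (v : Fin k → ℝ) : 0 ≤ e2 v := Real.sqrt_nonneg _

lemma e2_sq (v : Fin k → ℝ) : e2 v ^ 2 = v ⬝ᵥ v := by
  have h : 0 ≤ v ⬝ᵥ v := sum_nonneg fun i _ => mul_self_nonneg (v i)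
  rw [e2_eq_sqrt_dotProduct, Real.sq_sqrt h]

lemma dotProduct_le_e2_mul_e2 (v w : Fin k → ℝ) : v ⬝ᵥ w ≤ e2 v * e2 w :=
  Real.sum_mul_le_sqrt_mul_sqrt _ v w

lemma e2_mulVec_of_transpose_mul_self {U : Matrix (Fin m) (Fin n) ℝ} (hU : Uᵀ * U = 1)
    (y : Fin n → ℝ) : e2 (U *ᵥ y) = e2 y := by
  rw [e2_eq_sqrt_dotProduct, e2_eq_sqrt_dotProduct, dotProduct_mulVec, ← mulVec_transpose,
    mulVec_mulVec, hU, one_mulVec]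

lemma e2_transpose_mulVec_le {V : Matrix (Fin m) (Fin n) ℝ} (hV : Vᵀ * V = 1)
    (x : Fin m → ℝ) : e2 (Vᵀ *ᵥ x) ≤ e2 x := by
  generalize hz : Vᵀ *ᵥ x = z
  have hsq : e2 z ^ 2 ≤ e2 x * e2 z :=
    calc e2 z ^ 2 = z ⬝ᵥ z := e2_sq z
      _ = x ⬝ᵥ (V *ᵥ z) := by rw [dotProduct_mulVec, ← mulVec_transpose, hz]
      _ ≤ e2 x * e2 (V *ᵥ z) := dotProduct_le_e2_mul_e2 _ _
      _ = e2 x * e2 z := by rw [e2_mulVec_of_transpose_mul_self hV]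
  nlinarith [e2_nonneg x, e2_nonneg z]

lemma e2_diagonal_mulVec_le {d : Fin k → ℝ} {c : ℝ} (hc : 0 ≤ c) (hd : ∀ l, |d l| ≤ c)
    (z : Fin k → ℝ) : e2 (diagonal d *ᵥ z) ≤ c * e2 z := by
  have hsum : ∑ l, (diagonal d *ᵥ z) l ^ 2 ≤ c ^ 2 * ∑ l, z l ^ 2 := by
    rw [mul_sum]
    refine sum_le_sum fun l _ => ?_
    rw [mulVec_diagonal, mul_pow, ← sq_abs (d l)]
    gcongr
    exact hd l
  calc e2 (diagonal d *ᵥ z) ≤ √(c ^ 2 * ∑ l, z l ^ 2) := Real.sqrt_le_sqrt hsum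
    _ = c * e2 z := by rw [Real.sqrt_mul (sq_nonneg c), Real.sqrt_sq hc, e2]

lemma specNorm_le_of_forall {A : Matrix (Fin m) (Fin n) ℝ} {c : ℝ} (hc : 0 ≤ c)
    (h : ∀ x, e2 x ≤ 1 → e2 (A *ᵥ x) ≤ c) : specNorm A ≤ c :=
  Real.sSup_le (by rintro _ ⟨x, hx, rfl⟩; exact h x hx) hc

lemma e2_mulVec_le_frobNorm (A : Matrix (Fin m) (Fin n) ℝ) {x : Fin n → ℝ} (hx : e2 x ≤ 1) :
    e2 (A *ᵥ x) ≤ frobNorm A := by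
  have hx' : ∑ j, x j ^ 2 ≤ 1 := Real.sqrt_le_one.1 hx
  refine Real.sqrt_le_sqrt (sum_le_sum fun i _ => ?_)
  have hrow : (A *ᵥ x) i ^ 2 ≤ (∑ j, A i j ^ 2) * ∑ j, x j ^ 2 := by
    simpa only [mulVec, dotProduct] using sum_mul_sq_le_sq_mul_sq univ (A i) x
  nlinarith [sum_nonneg fun j (_ : j ∈ univ) => sq_nonneg (A i j)]

lemma le_specNorm (A : Matrix (Fin m) (Fin n) ℝ) {x : Fin n → ℝ} (hx : e2 x ≤ 1) :
    e2 (A *ᵥ x) ≤ specNorm A :=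
  le_csSup ⟨frobNorm A, by rintro _ ⟨y, hy, rfl⟩; exact e2_mulVec_le_frobNorm A hy⟩ ⟨x, hx, rfl⟩

lemma dotProduct_mulVec_le_specNorm (W : Matrix (Fin m) (Fin n) ℝ) {u : Fin m → ℝ}
    {v : Fin n → ℝ} (hu : e2 u ≤ 1) (hv : e2 v ≤ 1) : u ⬝ᵥ (W *ᵥ v) ≤ specNorm W :=
  calc u ⬝ᵥ (W *ᵥ v) ≤ e2 u * e2 (W *ᵥ v) := dotProduct_le_e2_mul_e2 _ _
    _ ≤ e2 (W *ᵥ v) := mul_le_of_le_one_left (e2_nonneg _) hu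
    _ ≤ specNorm W := le_specNorm W hv

lemma specNorm_mul_diagonal_mul_transpose_le {U : Matrix (Fin m) (Fin k) ℝ}
    {V : Matrix (Fin n) (Fin k) ℝ} (hU : Uᵀ * U = 1) (hV : Vᵀ * V = 1) {d : Fin k → ℝ}
    {c : ℝ} (hc : 0 ≤ c) (hd : ∀ l, |d l| ≤ c) : specNorm (U * diagonal d * Vᵀ) ≤ c := by
  refine specNorm_le_of_forall hc fun x hx => ?_
  calc e2 ((U * diagonal d * Vᵀ) *ᵥ x) = e2 (diagonal d *ᵥ (Vᵀ *ᵥ x)) := by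
        rw [← mulVec_mulVec, ← mulVec_mulVec, e2_mulVec_of_transpose_mul_self hU]
    _ ≤ c * e2 (Vᵀ *ᵥ x) := e2_diagonal_mulVec_le hc hd _
    _ ≤ c * 1 := by gcongr; exact (e2_transpose_mulVec_le hV x).trans hx
    _ = c := mul_one c

lemma e2_col_of_transpose_mul_self {U : Matrix (Fin m) (Fin k) ℝ} (hU : Uᵀ * U = 1) (l : Fin k) :
    e2 (fun i => U i l) = 1 := by
  have h : (Uᵀ * U) l l = 1 := by rw [hU, one_apply_eq]
  rw [mul_apply'] at h
  rw [e2_eq_sqrt_dotProduct, Real.sqrt_eq_one]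
  exact h

lemma transpose_mul_mul_apply_self_le_specNorm {U : Matrix (Fin m) (Fin k) ℝ}
    {V : Matrix (Fin n) (Fin k) ℝ} (hU : Uᵀ * U = 1) (hV : Vᵀ * V = 1)
    (W : Matrix (Fin m) (Fin n) ℝ) (l : Fin k) : (Uᵀ * W * V) l l ≤ specNorm W := by
  have h : (Uᵀ * W * V) l l = (fun i => U i l) ⬝ᵥ (W *ᵥ fun j => V j l) := by
    rw [Matrix.mul_assoc]; rfl
  rw [h]
  exact dotProduct_mulVec_le_specNorm W (e2_col_of_transpose_mul_self hU l).le
    (e2_col_of_transpose_mul_self hV l).le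

lemma frobInner_eq_trace (A B : Matrix (Fin m) (Fin n) ℝ) : frobInner A B = (Aᵀ * B).trace := by
  simp only [frobInner, trace, Matrix.diag, mul_apply, transpose_apply]
  rw [sum_comm]

lemma frobInner_mul_diagonal_mul_transpose (U : Matrix (Fin m) (Fin k) ℝ)
    (V : Matrix (Fin n) (Fin k) ℝ) (d : Fin k → ℝ) (W : Matrix (Fin m) (Fin n) ℝ) :
    frobInner (U * diagonal d * Vᵀ) W = ∑ l, d l * (Uᵀ * W * V) l l := by
  rw [frobInner_eq_trace, transpose_mul, transpose_mul, transpose_transpose, diagonal_transpose,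
    Matrix.mul_assoc, Matrix.mul_assoc, trace_mul_comm, Matrix.mul_assoc, Matrix.mul_assoc,
    ← Matrix.mul_assoc Uᵀ]
  simp only [trace, Matrix.diag, diagonal_mul]

lemma transpose_mul_mul_diagonal_mul_transpose_mul {U : Matrix (Fin m) (Fin k) ℝ}
    {V : Matrix (Fin n) (Fin k) ℝ} (hU : Uᵀ * U = 1) (hV : Vᵀ * V = 1) (d : Fin k → ℝ) :
    Uᵀ * (U * diagonal d * Vᵀ) * V = diagonal d := by
  simp only [← Matrix.mul_assoc, hU, Matrix.one_mul]
  rw [Matrix.mul_assoc, hV, Matrix.mul_one]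

lemma mul_diagonal_mul_transpose_sub_smul (U : Matrix (Fin m) (Fin k) ℝ)
    (V : Matrix (Fin n) (Fin k) ℝ) (a b : Fin k → ℝ) (c : ℝ) :
    U * diagonal a * Vᵀ - c • (U * diagonal b * Vᵀ) =
      U * diagonal (fun l => a l - c * b l) * Vᵀ := by
  rw [← Matrix.smul_mul, ← Matrix.mul_smul, ← diagonal_smul, ← Matrix.sub_mul, ← Matrix.mul_sub,
    diagonal_sub]
  rfl

end

noncomputable def proxObjective (L : Matrix (Fin m) (Fin n) ℝ) (μ : ℝ)
    (W : Matrix (Fin m) (Fin n) ℝ) : ℝ :=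
  frobInner L W - μ / 2 * frobSq W

lemma frobSq_nonneg (A : Matrix (Fin m) (Fin n) ℝ) : 0 ≤ frobSq A :=
  sum_nonneg fun i _ => sum_nonneg fun j _ => sq_nonneg (A i j)

lemma proxObjective_sub (L W W' : Matrix (Fin m) (Fin n) ℝ) (μ : ℝ) :
    proxObjective L μ W - proxObjective L μ W' =
      frobInner (L - μ • W') (W - W') - μ / 2 * frobSq (W - W') := by
  simp only [proxObjective, frobInner, frobSq, Matrix.sub_apply, Matrix.smul_apply, smul_eq_mul,
    mul_sum, ← sum_sub_distrib]
  exact sum_congr rfl fun i _ => sum_congr rfl fun j _ => by ring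

lemma proxObjective_le_of_frobInner_nonpos {L W W' : Matrix (Fin m) (Fin n) ℝ} {μ : ℝ}
    (hμ : 0 ≤ μ) (h : frobInner (L - μ • W') (W - W') ≤ 0) :
    proxObjective L μ W ≤ proxObjective L μ W' := by
  have := proxObjective_sub L W W' μ
  nlinarith [frobSq_nonneg (W - W')]

lemma sub_mul_min_div_mul_sub_nonpos {σ μ t : ℝ} (hμ : 0 < μ) (ht : t ≤ 1) :
    (σ - μ * min (σ / μ) 1) * (t - min (σ / μ) 1) ≤ 0 := by
  rcases le_total σ μ with h | h
  · rw [min_eq_left ((div_le_one hμ).2 h), mul_div_cancel₀ σ hμ.ne', sub_self, zero_mul]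
  · rw [min_eq_right ((one_le_div hμ).2 h), mul_one]
    exact mul_nonpos_of_nonneg_of_nonpos (sub_nonneg.2 h) (sub_nonpos.2 ht)

/-- the optimal solution of
`max { ⟨L, W⟩ - (μ/2)‖W‖_F² : ‖W‖ ≤ 1 }` (spectral norm constraint) is
`W_μ(L) = U Diag(min{σ̄/μ, 1}) Vᵀ`, where `L = U Diag(σ̄) Vᵀ` is an SVD of `L`. -/
theorem stmt2 (k : ℕ) (L : Matrix (Fin m) (Fin n) ℝ) (μ : ℝ) (hμ : 0 < μ)
    (U : Matrix (Fin m) (Fin k) ℝ) (V : Matrix (Fin n) (Fin k) ℝ) (σ : Fin k → ℝ)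
    (hU : Uᵀ * U = 1) (hV : Vᵀ * V = 1) (hσ : ∀ i, 0 ≤ σ i)
    (hL : L = U * Matrix.diagonal σ * Vᵀ)
    (Wmu : Matrix (Fin m) (Fin n) ℝ)
    (hW : Wmu = U * Matrix.diagonal (fun i => min (σ i / μ) 1) * Vᵀ) :
    specNorm Wmu ≤ 1 ∧
      ∀ W : Matrix (Fin m) (Fin n) ℝ, specNorm W ≤ 1 →
        frobInner L W - μ / 2 * frobSq W ≤ frobInner L Wmu - μ / 2 * frobSq Wmu := by
  have hd : ∀ l, |min (σ l / μ) 1| ≤ 1 := fun l =>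
    abs_le.2 ⟨by linarith [le_min (div_nonneg (hσ l) hμ.le) zero_le_one], min_le_right _ _⟩
  refine ⟨hW ▸ specNorm_mul_diagonal_mul_transpose_le hU hV zero_le_one hd, fun W hW1 => ?_⟩
  refine proxObjective_le_of_frobInner_nonpos hμ.le ?_
  rw [hL, hW, mul_diagonal_mul_transpose_sub_smul, frobInner_mul_diagonal_mul_transpose,
    Matrix.mul_sub, Matrix.sub_mul, transpose_mul_mul_diagonal_mul_transpose_mul hU hV]
  refine sum_nonpos fun l _ => ?_
  simpa using sub_mul_min_div_mul_sub_nonpos hμ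
    ((transpose_mul_mul_apply_self_le_specNorm hU hV W l).trans hW1)
end

section
/- Let W_μ and Z_ν be the gradients of the smoothed nuclear and ℓ1 functions, i.e., W_μ(L) = U Diag(min{σ̄/μ, 1})Vᵀ for L = U Diag(σ̄)Vᵀ, and [Z_ν(S)]_{ij} = sgn(S_{ij})min{|S_{ij}|/ν, ξ} on Ω and 0 off Ω. Then the matrix L_{k+1} = U Diag(σ*)Vᵀ with σ*_i = σ̄_i - ρσ̄_i / max{σ̄_i, ρ+μ}, where U Diag(σ̄)Vᵀ is the SVD of M := ρ Z_ν(S_k) - S_k + π_Ω(D), satisfies the equation W_μ(L_{k+1}) - Z_ν(S_k) + (1/ρ)(L_{k+1} + S_k - π_Ω(D)) = 0. -/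
open Matrix BigOperators Finset

variable {m n : ℕ}

/-- Gradient of the smoothed ℓ1 term: `[Z_ν(S)]ᵢⱼ = sgn(Sᵢⱼ)min{|Sᵢⱼ|/ν, ξ}` on Ω, 0 off Ω. -/
noncomputable def znu (ν ξ : ℝ) (Ω : Finset (Fin m × Fin n))
    (S : Matrix (Fin m) (Fin n) ℝ) : Matrix (Fin m) (Fin n) ℝ :=
  Matrix.of fun i j => if (i, j) ∈ Ω then Real.sign (S i j) * min (|S i j| / ν) ξ else 0

/-- with `σ*ᵢ = σ̄ᵢ - ρσ̄ᵢ/max{σ̄ᵢ, ρ+μ}` and `U Diag(σ̄)Vᵀ` the SVD of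
`M = ρZ_ν(S_k) - S_k + π_Ω(D)`, the matrix `L_{k+1} = U Diag(σ*)Vᵀ` satisfies
`W_μ(L_{k+1}) - Z_ν(S_k) + (1/ρ)(L_{k+1} + S_k - π_Ω(D)) = 0`, where
`W_μ(L_{k+1}) = U Diag(min{σ*/μ,1})Vᵀ` is the gradient of the smoothed nuclear norm. -/
theorem stmt9 (k : ℕ) (μ ν ρ ξ : ℝ) (hμ : 0 < μ) (hν : 0 < ν) (hρ : 0 < ρ) (hξ : 0 < ξ)
    (D Sk : Matrix (Fin m) (Fin n) ℝ) (Ω : Finset (Fin m × Fin n))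
    (U : Matrix (Fin m) (Fin k) ℝ) (V : Matrix (Fin n) (Fin k) ℝ) (σbar : Fin k → ℝ)
    (hU : Uᵀ * U = 1) (hV : Vᵀ * V = 1) (hσ : ∀ i, 0 ≤ σbar i)
    (hM : ρ • znu ν ξ Ω Sk - Sk + piom Ω D = U * Matrix.diagonal σbar * Vᵀ)
    (σstar : Fin k → ℝ)
    (hσstar : ∀ i, σstar i = σbar i - ρ * σbar i / max (σbar i) (ρ + μ))
    (L1 : Matrix (Fin m) (Fin n) ℝ)
    (hL1 : L1 = U * Matrix.diagonal σstar * Vᵀ) :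
    U * Matrix.diagonal (fun i => min (σstar i / μ) 1) * Vᵀ - znu ν ξ Ω Sk +
        (1 / ρ) • (L1 + Sk - piom Ω D) = 0 := by
  have key : ∀ i, min (σstar i / μ) 1 = (σbar i - σstar i) / ρ := by
    intro i
    have hs := hσ i
    have hρμ : 0 < ρ + μ := by linarith
    rcases le_or_gt (σbar i) (ρ + μ) with h | h
    · have hmax : max (σbar i) (ρ + μ) = ρ + μ := max_eq_right h
      have h1 : σbar i - ρ * σbar i / (ρ + μ) = μ * σbar i / (ρ + μ) := by
        field_simp; ring
      have h2 : μ * σbar i / (ρ + μ) / μ = σbar i / (ρ + μ) := by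
        field_simp
      rw [hσstar i, hmax, h1, h2, min_eq_left (by rw [div_le_one hρμ]; exact h)]
      field_simp
      ring
    · have hmax : max (σbar i) (ρ + μ) = σbar i := max_eq_left h.le
      have hspos : 0 < σbar i := lt_trans hρμ h
      rw [hσstar i, hmax]
      have h1 : σbar i - ρ * σbar i / σbar i = σbar i - ρ := by
        rw [mul_div_assoc, div_self hspos.ne', mul_one]
      rw [h1]
      have hmin : (1:ℝ) ≤ (σbar i - ρ) / μ := by
        rw [le_div_iff₀ hμ]; linarith
      rw [min_eq_right hmin]
      rw [sub_sub_cancel, div_self hρ.ne']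
  have hd : Matrix.diagonal (fun i => min (σstar i / μ) 1)
      = (1 / ρ) • (Matrix.diagonal σbar - Matrix.diagonal σstar) := by
    ext i j
    by_cases hij : i = j
    · subst hij
      simp only [Matrix.diagonal_apply_eq, Matrix.smul_apply, Matrix.sub_apply, smul_eq_mul]
      rw [key i]; ring
    · simp [Matrix.diagonal_apply_ne _ hij, hij]
  have hSk : Sk - piom Ω D = ρ • znu ν ξ Ω Sk - U * Matrix.diagonal σbar * Vᵀ := by
    rw [← hM]; abel
  rw [hL1, hd]
  have expand : L1 + Sk - piom Ω D = L1 + (Sk - piom Ω D) := by abel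
  rw [hL1] at expand
  rw [add_sub_assoc, hSk]
  set A := U * Matrix.diagonal σbar * Vᵀ with hA
  set B := U * Matrix.diagonal σstar * Vᵀ with hB
  set Z := znu ν ξ Ω Sk with hZ
  have hUAB : U * ((1 / ρ) • (Matrix.diagonal σbar - Matrix.diagonal σstar)) * Vᵀ
      = (1 / ρ) • (A - B) := by
    rw [Matrix.mul_smul, Matrix.smul_mul, Matrix.mul_sub, Matrix.sub_mul]
  rw [hUAB]
  have hρ' : (1 / ρ) • (ρ • Z) = Z := by
    rw [smul_smul, one_div, inv_mul_cancel₀ hρ.ne', one_smul]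
  rw [smul_add, smul_sub, smul_sub, hρ']
  abel
end

section
/- Let B = ρ W_μ(L_{k+1}) - L_{k+1} + π_Ω(D). The matrix S_{k+1} defined by (S_{k+1})_{ij} = sgn(B_{ij}) max{ (ν/(ν+ρ))|B_{ij}|, |B_{ij}| - ρξ } for (i,j) ∈ Ω and (S_{k+1})_{ij} = B_{ij} for (i,j) ∉ Ω satisfies the equation -W_μ(L_{k+1}) + (1/ρ)(L_{k+1} + S_{k+1} - π_Ω(D)) + Z_ν(S_{k+1}) = 0, where [Z_ν(S)]_{ij} = sgn(S_{ij})min{|S_{ij}|/ν, ξ} on Ω and 0 off Ω. -/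
open Matrix BigOperators Finset

variable {m n : ℕ}

/-!
Multiplying the residual by `ρ` turns the equation into `S + ρ Z_ν(S) = B`, which splits into
scalar equations. Off `Ω` it reads `S = B`. On `Ω` it is `s + ρ sgn(s) min(|s|/ν, ξ) = b`: `s` has
the sign of `b`, and `|s| = max(ν|b|/(ν+ρ), |b| - ρξ)` inverts `t ↦ t + ρ min(t/ν, ξ)`, the two
branches of the max matching those of the min according as `|b| ≤ (ν + ρ)ξ` or not.
-/

lemma max_add_mul_min_eq {ν ρ : ℝ} (hν : 0 < ν) (hρ : 0 < ρ) (ξ a : ℝ) :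
    max (ν / (ν + ρ) * a) (a - ρ * ξ) + ρ * min (max (ν / (ν + ρ) * a) (a - ρ * ξ) / ν) ξ = a := by
  have hνρ : 0 < ν + ρ := by positivity
  rcases le_total a ((ν + ρ) * ξ) with h | h
  · have hmax : a - ρ * ξ ≤ ν / (ν + ρ) * a := by
      rw [div_mul_eq_mul_div, le_div_iff₀ hνρ]; nlinarith
    have hmin : ν / (ν + ρ) * a / ν ≤ ξ := by
      rw [mul_div_right_comm, div_div_cancel_left' hν.ne', ← div_eq_inv_mul, div_le_iff₀ hνρ]
      linarith
    rw [max_eq_left hmax, min_eq_left hmin]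
    field_simp
  · have hmax : ν / (ν + ρ) * a ≤ a - ρ * ξ := by
      rw [div_mul_eq_mul_div, div_le_iff₀ hνρ]; nlinarith
    have hmin : ξ ≤ (a - ρ * ξ) / ν := by
      rw [le_div_iff₀ hν]; linarith
    rw [max_eq_right hmax, min_eq_right hmin]
    ring

lemma sign_mul_abs_eq_self (b : ℝ) : Real.sign b * |b| = b := by
  rcases lt_trichotomy b 0 with hb | rfl | hb
  · simp [Real.sign_of_neg hb, abs_of_neg hb]
  · simp
  · simp [Real.sign_of_pos hb, abs_of_pos hb]

lemma add_mul_sign_mul_min_eq {ν ρ : ℝ} (hν : 0 < ν) (hρ : 0 < ρ) {ξ b s : ℝ}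
    (hs : s = Real.sign b * max (ν / (ν + ρ) * |b|) (|b| - ρ * ξ)) :
    s + ρ * (Real.sign s * min (|s| / ν) ξ) = b := by
  rcases eq_or_ne b 0 with rfl | hb
  · simp [hs]
  set M := max (ν / (ν + ρ) * |b|) (|b| - ρ * ξ)
  have hM : 0 < M := lt_max_of_lt_left (by have := abs_pos.mpr hb; positivity)
  obtain ⟨hsign, habs⟩ : Real.sign s = Real.sign b ∧ |s| = M := by
    rcases hb.lt_or_gt with hb | hb
    · simp [hs, Real.sign_of_neg hb, Real.sign_neg, Real.sign_of_pos hM, hM.le]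
    · simp [hs, Real.sign_of_pos hb, Real.sign_of_pos hM, hM.le]
  calc s + ρ * (Real.sign s * min (|s| / ν) ξ)
      = Real.sign b * (M + ρ * min (M / ν) ξ) := by rw [hsign, habs, hs]; ring
    _ = b := by rw [max_add_mul_min_eq hν hρ, sign_mul_abs_eq_self]

lemma add_smul_znu_eq {ν ρ : ℝ} (hν : 0 < ν) (hρ : 0 < ρ) {ξ : ℝ}
    {Ω : Finset (Fin m × Fin n)} {B S : Matrix (Fin m) (Fin n) ℝ}
    (hS : S = Matrix.of fun i j =>
      if (i, j) ∈ Ω then Real.sign (B i j) * max (ν / (ν + ρ) * |B i j|) (|B i j| - ρ * ξ)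
      else B i j) :
    S + ρ • znu ν ξ Ω S = B := by
  subst hS
  ext i j
  by_cases hij : (i, j) ∈ Ω
  · simpa [znu, hij] using add_mul_sign_mul_min_eq hν hρ (ξ := ξ) (b := B i j) rfl
  · simp [znu, hij]

lemma neg_add_smul_add_eq_inv_smul_sub {ρ : ℝ} (hρ : ρ ≠ 0)
    (W L S D Z : Matrix (Fin m) (Fin n) ℝ) :
    -W + (1 / ρ) • (L + S - D) + Z = ρ⁻¹ • (S + ρ • Z - (ρ • W - L + D)) := by
  ext i j
  simp only [Matrix.add_apply, Matrix.sub_apply, Matrix.neg_apply, Matrix.smul_apply, smul_eq_mul]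
  field_simp
  ring

theorem stmt10_general (ν ρ ξ : ℝ) (hν : 0 < ν) (hρ : 0 < ρ)
    (D L1 W : Matrix (Fin m) (Fin n) ℝ) (Ω : Finset (Fin m × Fin n))
    (B : Matrix (Fin m) (Fin n) ℝ) (hB : B = ρ • W - L1 + piom Ω D)
    (S1 : Matrix (Fin m) (Fin n) ℝ)
    (hS1 : S1 = Matrix.of fun i j =>
      if (i, j) ∈ Ω then Real.sign (B i j) * max (ν / (ν + ρ) * |B i j|) (|B i j| - ρ * ξ)
      else B i j) :
    -W + (1 / ρ) • (L1 + S1 - piom Ω D) + znu ν ξ Ω S1 = 0 := by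
  rw [neg_add_smul_add_eq_inv_smul_sub hρ.ne', ← hB,
    add_smul_znu_eq hν hρ hS1, sub_self, smul_zero]

/-- with `B = ρW_μ(L_{k+1}) - L_{k+1} + π_Ω(D)`, the matrix `S_{k+1}` with
entries `sgn(Bᵢⱼ)max{(ν/(ν+ρ))|Bᵢⱼ|, |Bᵢⱼ| - ρξ}` on Ω and `Bᵢⱼ` off Ω satisfies
`-W_μ(L_{k+1}) + (1/ρ)(L_{k+1} + S_{k+1} - π_Ω(D)) + Z_ν(S_{k+1}) = 0`. -/
theorem stmt10 (μ ν ρ ξ : ℝ) (hμ : 0 < μ) (hν : 0 < ν) (hρ : 0 < ρ) (hξ : 0 < ξ)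
    (D L1 W : Matrix (Fin m) (Fin n) ℝ) (Ω : Finset (Fin m × Fin n))
    (B : Matrix (Fin m) (Fin n) ℝ) (hB : B = ρ • W - L1 + piom Ω D)
    (S1 : Matrix (Fin m) (Fin n) ℝ)
    (hS1 : S1 = Matrix.of fun i j =>
      if (i, j) ∈ Ω then Real.sign (B i j) * max (ν / (ν + ρ) * |B i j|) (|B i j| - ρ * ξ)
      else B i j) :
    -W + (1 / ρ) • (L1 + S1 - piom Ω D) + znu ν ξ Ω S1 = 0 :=
  stmt10_general ν ρ ξ hν hρ D L1 W Ω B hB S1 hS1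
end

section
/- Consider the problem min { ξ||π_Ω(S)||_1 + ⟨Q, L - L̃⟩ + (1/(2ρ))||L - L̃||_F² : ||L + S - π_Ω(D)||_F ≤ δ } with δ = 0. Writing q := L̃ - ρQ, the optimal solution is S* = sgn(π_Ω(D - q)) ⊙ max{|π_Ω(D - q)| - ξρE, 0} - π_{Ω^c}(q) and L* = π_Ω(D) - S*, where E is the all-ones matrix and π_{Ω^c} projects onto the complement of Ω. -/
open Matrix BigOperators Finset

variable {m n : ℕ}

/-- Projection onto the complement of Ω. -/
def piomc (Ω : Finset (Fin m × Fin n)) (A : Matrix (Fin m) (Fin n) ℝ) :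
    Matrix (Fin m) (Fin n) ℝ :=
  Matrix.of fun i j => if (i, j) ∈ Ω then 0 else A i j


/-
With δ = 0 the constraint forces L = π_Ω(D) - S, and the objective then splits into a sum of
independent scalar problems, one per entry. Completing the square, the entry (i, j) is, up to the
factor 1/ρ and an additive constant, wρ|s| + (s - t)²/2 with t = (π_Ω(D) - q)ᵢⱼ and weight w = ξ
on Ω, w = 0 off Ω. Its minimiser is the soft threshold of t at wρ, which is t itself off Ω.
Optimality of the soft threshold s₀ is the subgradient inequality: t - s₀ = μ g with |g| ≤ 1 and
g s₀ = |s₀|, and then μ|s| + (s - t)²/2 exceeds its value at s₀ by at least (s - s₀)²/2.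
-/

noncomputable def softThreshold (μ t : ℝ) : ℝ := Real.sign t * max (|t| - μ) 0

lemma Real.sign_mul_abs (t : ℝ) : Real.sign t * |t| = t := by
  rcases lt_trichotomy t 0 with h | rfl | h
  · rw [Real.sign_of_neg h, abs_of_neg h]; ring
  · simp
  · rw [Real.sign_of_pos h, abs_of_pos h, one_mul]

@[simp] lemma softThreshold_zero (t : ℝ) : softThreshold 0 t = t := by
  simp [softThreshold, Real.sign_mul_abs]

lemma exists_subgradient_softThreshold {μ : ℝ} (hμ : 0 ≤ μ) (t : ℝ) :
    ∃ g : ℝ, |g| ≤ 1 ∧ g * softThreshold μ t = |softThreshold μ t| ∧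
      t - softThreshold μ t = μ * g := by
  rcases le_or_gt |t| μ with hle | hgt
  · have hzero : softThreshold μ t = 0 := by simp [softThreshold, hle]
    refine ⟨t / μ, ?_, by simp [hzero], ?_⟩
    · rw [abs_div, abs_of_nonneg hμ]; exact div_le_one_of_le₀ hle hμ
    · rcases hμ.eq_or_lt with rfl | hpos
      · simpa [hzero] using hle
      · rw [hzero, mul_div_cancel₀ _ hpos.ne', sub_zero]
  · have hmax : max (|t| - μ) 0 = |t| - μ := max_eq_left (by linarith)
    rcases lt_or_gt_of_ne (show t ≠ 0 by rintro rfl; simp at hgt; linarith) with ht | ht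
    · rw [abs_of_neg ht] at hgt hmax
      refine ⟨-1, by norm_num, ?_, ?_⟩ <;>
        simp only [softThreshold, Real.sign_of_neg ht, abs_of_neg ht, hmax]
      · rw [abs_of_nonpos (by linarith)]; ring
      · ring
    · rw [abs_of_pos ht] at hgt hmax
      refine ⟨1, by norm_num, ?_, ?_⟩ <;>
        simp only [softThreshold, Real.sign_of_pos ht, abs_of_pos ht, hmax]
      · rw [abs_of_nonneg (by linarith)]; ring
      · ring

lemma le_abs_add_sq_of_subgradient {μ g s₀ t : ℝ} (hμ : 0 ≤ μ) (hg : |g| ≤ 1)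
    (hgs : g * s₀ = |s₀|) (ht : t - s₀ = μ * g) (s : ℝ) :
    μ * |s₀| + (s₀ - t) ^ 2 / 2 ≤ μ * |s| + (s - t) ^ 2 / 2 := by
  have hgs_le : g * s ≤ |s| :=
    (le_abs_self _).trans (by rw [abs_mul]; exact mul_le_of_le_one_left (abs_nonneg s) hg)
  have hs₀ : μ * |s₀| = (t - s₀) * s₀ := by rw [← hgs, ht]; ring
  have hs : μ * (g * s) = (t - s₀) * s := by rw [ht]; ring
  nlinarith [mul_le_mul_of_nonneg_left hgs_le hμ, sq_nonneg (s - s₀)]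

lemma softThreshold_le_abs_add_sq {μ : ℝ} (hμ : 0 ≤ μ) (t s : ℝ) :
    μ * |softThreshold μ t| + (softThreshold μ t - t) ^ 2 / 2 ≤ μ * |s| + (s - t) ^ 2 / 2 := by
  obtain ⟨g, hg, hgs, ht⟩ := exists_subgradient_softThreshold hμ t
  exact le_abs_add_sq_of_subgradient hμ hg hgs ht s

lemma abs_add_mul_sub_add_sq_eq {ρ : ℝ} (hρ : ρ ≠ 0) (w a c s : ℝ) :
    w * |s| + a * (c - s) + 1 / (2 * ρ) * (c - s) ^ 2
      = ρ⁻¹ * (w * ρ * |s| + (s - (c + ρ * a)) ^ 2 / 2) - ρ * a ^ 2 / 2 := by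
  field_simp
  ring

lemma softThreshold_minimizes {w ρ : ℝ} (hw : 0 ≤ w) (hρ : 0 < ρ) (a c s : ℝ) :
    w * |softThreshold (w * ρ) (c + ρ * a)| + a * (c - softThreshold (w * ρ) (c + ρ * a))
        + 1 / (2 * ρ) * (c - softThreshold (w * ρ) (c + ρ * a)) ^ 2
      ≤ w * |s| + a * (c - s) + 1 / (2 * ρ) * (c - s) ^ 2 := by
  rw [abs_add_mul_sub_add_sq_eq hρ.ne', abs_add_mul_sub_add_sq_eq hρ.ne']
  gcongr ?_ - _
  exact mul_le_mul_of_nonneg_left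
    (softThreshold_le_abs_add_sq (mul_nonneg hw hρ.le) _ s) (inv_nonneg.2 hρ.le)

lemma frobNorm_nonpos_iff (A : Matrix (Fin m) (Fin n) ℝ) : frobNorm A ≤ 0 ↔ A = 0 := by
  have hrow : ∀ i, 0 ≤ ∑ j, A i j ^ 2 := fun i => sum_nonneg fun j _ => sq_nonneg _
  rw [frobNorm, (Real.sqrt_nonneg _).ge_iff_eq', Real.sqrt_eq_zero (sum_nonneg fun i _ => hrow i),
    Fintype.sum_eq_zero_iff_of_nonneg hrow]
  simp [funext_iff, Fintype.sum_eq_zero_iff_of_nonneg (fun _ => sq_nonneg _), ← Matrix.ext_iff]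

lemma objective_eq_sum (ξ ρ : ℝ) (Ω : Finset (Fin m × Fin n))
    (Q Lt L S : Matrix (Fin m) (Fin n) ℝ) :
    ξ * l1Norm (piom Ω S) + frobInner Q (L - Lt) + 1 / (2 * ρ) * frobSq (L - Lt)
      = ∑ i, ∑ j, (ξ * |piom Ω S i j| + Q i j * (L - Lt) i j + 1 / (2 * ρ) * (L - Lt) i j ^ 2) := by
  simp only [l1Norm, frobInner, frobSq, mul_sum, sum_add_distrib]

/-- for the problem
`min { ξ‖π_Ω(S)‖₁ + ⟨Q, L - L̃⟩ + (1/(2ρ))‖L - L̃‖_F² : ‖L + S - π_Ω(D)‖_F ≤ δ }` with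
`δ = 0` and `q = L̃ - ρQ`, the optimal solution is
`S* = sgn(π_Ω(D - q)) ⊙ max{|π_Ω(D - q)| - ξρE, 0} - π_{Ωᶜ}(q)` and `L* = π_Ω(D) - S*`. -/
theorem stmt12 (D Lt Q : Matrix (Fin m) (Fin n) ℝ) (Ω : Finset (Fin m × Fin n))
    (ρ ξ : ℝ) (hρ : 0 < ρ) (hξ : 0 < ξ)
    (q : Matrix (Fin m) (Fin n) ℝ) (hq : q = Lt - ρ • Q)
    (Sstar : Matrix (Fin m) (Fin n) ℝ)
    (hS : Sstar = (Matrix.of fun i j =>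
        Real.sign (piom Ω (D - q) i j) * max (|piom Ω (D - q) i j| - ξ * ρ) 0) - piomc Ω q)
    (Lstar : Matrix (Fin m) (Fin n) ℝ) (hL : Lstar = piom Ω D - Sstar) :
    frobNorm (Lstar + Sstar - piom Ω D) ≤ 0 ∧
      ∀ L S : Matrix (Fin m) (Fin n) ℝ, frobNorm (L + S - piom Ω D) ≤ 0 →
        ξ * l1Norm (piom Ω Sstar) + frobInner Q (Lstar - Lt) + 1 / (2 * ρ) * frobSq (Lstar - Lt)
          ≤ ξ * l1Norm (piom Ω S) + frobInner Q (L - Lt) + 1 / (2 * ρ) * frobSq (L - Lt) := by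
  refine ⟨(frobNorm_nonpos_iff _).2 (by rw [hL]; abel), fun L S hLS => ?_⟩
  obtain rfl : L = piom Ω D - S :=
    eq_sub_of_add_eq (sub_eq_zero.1 ((frobNorm_nonpos_iff _).1 hLS))
  subst hL
  rw [objective_eq_sum, objective_eq_sum]
  refine sum_le_sum fun i _ => sum_le_sum fun j _ => ?_
  -- Off Ω the ℓ1 term does not see `S`: those entries are the case of weight zero.
  set w := if (i, j) ∈ Ω then ξ else 0 with hw
  have hw0 : 0 ≤ w := by rw [hw]; split_ifs <;> linarith
  have habs : ∀ X : Matrix (Fin m) (Fin n) ℝ, ξ * |piom Ω X i j| = w * |X i j| := by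
    intro X; by_cases h : (i, j) ∈ Ω <;> simp [piom, hw, h]
  have hSstar : Sstar i j = softThreshold (w * ρ) ((piom Ω D - Lt) i j + ρ * Q i j) := by
    subst hS hq
    by_cases h : (i, j) ∈ Ω
    · simp only [piom, piomc, softThreshold, hw, h, of_apply, Matrix.sub_apply, Matrix.smul_apply,
        smul_eq_mul, ↓reduceIte, sub_zero]
      ring_nf
    · simp only [piom, piomc, hw, h, of_apply, Matrix.sub_apply, Matrix.smul_apply, smul_eq_mul,
        ↓reduceIte, Real.sign_zero, abs_zero, zero_sub, zero_mul, neg_sub, softThreshold_zero]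
      ring
  have hentry : ∀ X : Matrix (Fin m) (Fin n) ℝ,
      (piom Ω D - X - Lt) i j = (piom Ω D - Lt) i j - X i j := fun X => by
    simp only [Matrix.sub_apply]; ring
  rw [habs, habs, hentry, hentry, hSstar]
  exact softThreshold_minimizes hw0 hρ _ _ _
end

section
/- Suppose θ* > 0 and (L*, S*) satisfy L* + S* - π_Ω(D) = (1/(1+ρθ*))·π_Ω(S* + q - D), where S* = sgn(π_Ω(D-q)) ⊙ max{|π_Ω(D-q)| - ξ((1+ρθ*)/θ*)E, 0} - π_{Ω^c}(q). Then ||L* + S* - π_Ω(D)||_F = || min{ (ξ/θ*)E, (1/(1+ρθ*))|π_Ω(D-q)| } ||_F. -/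
open Matrix BigOperators Finset

variable {m n : ℕ}

lemma key15 (a c : ℝ) (hc : 0 ≤ c) :
    (Real.sign a * max (|a| - c) 0 - a) ^ 2 = (min c |a|) ^ 2 := by
  rcases lt_trichotomy a 0 with h | h | h
  · rw [Real.sign_of_neg h, abs_of_neg h]
    rcases le_total (-a - c) 0 with h2 | h2
    · rw [max_eq_right h2, min_eq_right (by linarith)]; ring
    · rw [max_eq_left h2, min_eq_left (by linarith)]; ring
  · simp [h, min_eq_right hc]
  · rw [Real.sign_of_pos h, abs_of_pos h]
    rcases le_total (a - c) 0 with h2 | h2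
    · rw [max_eq_right h2, min_eq_right (by linarith)]; ring
    · rw [max_eq_left h2, min_eq_left (by linarith)]; ring

/-- if `L* + S* - π_Ω(D) = (1/(1+ρθ*))·π_Ω(S* + q - D)` with
`S* = sgn(π_Ω(D-q)) ⊙ max{|π_Ω(D-q)| - ξ((1+ρθ*)/θ*)E, 0} - π_{Ωᶜ}(q)`, then
`‖L* + S* - π_Ω(D)‖_F = ‖min{(ξ/θ*)E, (1/(1+ρθ*))|π_Ω(D-q)|}‖_F`. -/
theorem stmt15 (D q Lstar Sstar : Matrix (Fin m) (Fin n) ℝ) (Ω : Finset (Fin m × Fin n))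
    (θ ρ ξ : ℝ) (hθ : 0 < θ) (hρ : 0 < ρ) (hξ : 0 < ξ)
    (hS : Sstar = (Matrix.of fun i j =>
        Real.sign (piom Ω (D - q) i j) *
          max (|piom Ω (D - q) i j| - ξ * ((1 + ρ * θ) / θ)) 0) - piomc Ω q)
    (hres : Lstar + Sstar - piom Ω D = (1 / (1 + ρ * θ)) • piom Ω (Sstar + q - D)) :
    frobNorm (Lstar + Sstar - piom Ω D) =
      frobNorm (Matrix.of fun i j =>
        min (ξ / θ) (1 / (1 + ρ * θ) * |piom Ω (D - q) i j|)) := by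

  have ht : (0:ℝ) < 1 + ρ * θ := by nlinarith
  rw [hres]
  unfold frobNorm
  congr 1
  apply Finset.sum_congr rfl
  intro i _
  apply Finset.sum_congr rfl
  intro j _
  by_cases hij : (i, j) ∈ Ω
  · have hc : (0:ℝ) ≤ ξ * ((1 + ρ * θ) / θ) := by positivity
    have hentry : ((1 / (1 + ρ * θ)) • piom Ω (Sstar + q - D)) i j
        = (1 / (1 + ρ * θ)) * (Real.sign (D i j - q i j) *
            max (|D i j - q i j| - ξ * ((1 + ρ * θ) / θ)) 0 - (D i j - q i j)) := by
      simp [hS, piom, piomc, hij, Matrix.smul_apply, Matrix.sub_apply, Matrix.add_apply]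
      exact Or.inl (by ring)
    rw [hentry]
    have hk := key15 (D i j - q i j) (ξ * ((1 + ρ * θ) / θ)) hc
    have hmin : min (ξ / θ) (1 / (1 + ρ * θ) * |piom Ω (D - q) i j|)
        = (1 / (1 + ρ * θ)) * min (ξ * ((1 + ρ * θ) / θ)) |D i j - q i j| := by
      have hpi : piom Ω (D - q) i j = D i j - q i j := by simp [piom, hij]
      rw [hpi]
      rcases le_total (ξ * ((1 + ρ * θ) / θ)) (|D i j - q i j|) with h2 | h2
      · rw [min_eq_left h2, min_eq_left]
        · field_simp
        · calc ξ / θ = (1 / (1 + ρ * θ)) * (ξ * ((1 + ρ * θ) / θ)) := by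
                field_simp
            _ ≤ 1 / (1 + ρ * θ) * |D i j - q i j| := by
                apply mul_le_mul_of_nonneg_left h2; positivity
      · rw [min_eq_right h2, min_eq_right]
        calc 1 / (1 + ρ * θ) * |D i j - q i j|
            ≤ (1 / (1 + ρ * θ)) * (ξ * ((1 + ρ * θ) / θ)) := by
              apply mul_le_mul_of_nonneg_left h2; positivity
          _ = ξ / θ := by field_simp
    simp only [Matrix.of_apply]
    rw [hmin, mul_pow, mul_pow, hk]
  · have hpi : piom Ω (D - q) i j = 0 := by simp [piom, hij]
    simp [piom, hij, hpi, Matrix.smul_apply, min_eq_right (le_of_lt (div_pos hξ hθ))]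
end
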